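/- Suppose n ∈ C([0,1]) and σ ∈ C²([0,1]) satisfy Assumption A with constants n₁, n₂, M₁, M₂, let m ≥ 1 be an integer and let k > 0. Let ψ : (0,1] → ℝ be twice differentiable, not identically zero, and satisfy ψ''(r) + [k²n(r)²/σ(r) + σ'(r)²/(4σ(r)²) − σ''(r)/(2σ(r)) − σ'(r)/(σ(r)r) − m(m+1)/r²]·ψ(r) = 0 for all r ∈ (0,1]. Suppose 0 < a < b ≤ 1 are such that J_{m+1/2}(k√M₁·a) = J_{m+1/2}(k√M₁·b) = 0 and J_{m+1/2}(k√M₁·r) ≠ 0 for all r ∈ (a,b). Then ψ has at least one zero in the interval [a,b]. -/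

import Mathlib

open Set

noncomputable section

/-- The Bessel function of the first kind of order `ν`:
`J_ν(x) = Σ_{s=0}^∞ ((−1)^s / (s!·Γ(ν+s+1)))·(x/2)^{2s+ν}`. -/
def besselJ (ν : ℝ) (x : ℝ) : ℝ :=
  ∑' s : ℕ, ((-1 : ℝ) ^ s / ((s.factorial : ℝ) * Real.Gamma (ν + (s : ℝ) + 1)))
    * (x / 2) ^ (2 * (s : ℝ) + ν)

/-- Assumption A: `n ∈ C([0,1])`, `σ ∈ C²([0,1])`, with constants
`1 < n₁ < n₂`, `1 < M₁ < M₂`, such that on `[0,1]` one has `n₁ < n < n₂`, `σ' ≤ 0`,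
`M₁ ≤ n²/σ ≤ M₂` and `σ'² ≥ 2σ''σ`. -/
def AssumptionA (n σ : ℝ → ℝ) (n₁ n₂ M₁ M₂ : ℝ) : Prop :=
  1 < n₁ ∧ n₁ < n₂ ∧ 1 < M₁ ∧ M₁ < M₂ ∧
  ContinuousOn n (Icc 0 1) ∧ ContDiffOn ℝ 2 σ (Icc 0 1) ∧
  ∀ r ∈ Icc (0:ℝ) 1,
    n₁ < n r ∧ n r < n₂ ∧
    derivWithin σ (Icc 0 1) r ≤ 0 ∧
    M₁ ≤ n r ^ 2 / σ r ∧ n r ^ 2 / σ r ≤ M₂ ∧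
    2 * derivWithin (derivWithin σ (Icc 0 1)) (Icc 0 1) r * σ r
      ≤ (derivWithin σ (Icc 0 1) r) ^ 2

/-!
For `c = k√M₁`, `v(r) = √r · J_{m+1/2}(c r)` is a power series in `r` solving `v'' + Q_v v = 0` with
`Q_v = c² - m(m+1)/r²`, and Assumption A (`σ > 0`, `σ' ≤ 0`, `σ'² ≥ 2σσ''`, `n²/σ ≥ M₁`) bounds the
potential `Q_ψ` of the equation of `ψ` below by `Q_v`. If `ψ` had no zero on `[a, b]`, normalise
signs so that `v > 0` on `(a, b)` and `ψ > 0` on `[a, b]`. The Wronskian `W = v'ψ - vψ'` has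
`W' = (Q_ψ - Q_v) v ψ ≥ 0` and `W(a) = v'(a) ψ(a) ≥ 0`, so `W ≥ 0`; hence `v/ψ`, whose derivative
is `W/ψ²`, is nondecreasing, although it vanishes at `a` and `b` and is positive in between.
-/

open Filter

theorem IsPreconnected.exists_mul_pos {X : Type*} [TopologicalSpace X] {s : Set X}
    (hs : IsPreconnected s) {f : X → ℝ} (hf : ContinuousOn f s) (hf₀ : ∀ x ∈ s, f x ≠ 0) :
    ∃ ε : ℝ, ∀ x ∈ s, 0 < ε * f x := by
  rcases s.eq_empty_or_nonempty with rfl | ⟨x₀, hx₀⟩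
  · exact ⟨1, by simp⟩
  refine ⟨f x₀, fun x hx => ?_⟩
  by_contra! hneg
  obtain ⟨y, hy, hy₀⟩ := hs.intermediate_value hx hx₀ (hf.const_smul (f x₀))
    ⟨hneg, mul_self_nonneg (f x₀)⟩
  exact mul_ne_zero (hf₀ x₀ hx₀) (hf₀ y hy) hy₀

section SturmComparison

variable {a b : ℝ} {u u' u'' p p' p'' Q₁ Q₂ : ℝ → ℝ}

theorem exists_nonpos_of_sturm_comparison (hab : a < b)
    (hu : ∀ x ∈ Icc a b, HasDerivWithinAt u (u' x) (Icc a b) x)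
    (hu' : ∀ x ∈ Icc a b, HasDerivWithinAt u' (u'' x) (Icc a b) x)
    (hp : ∀ x ∈ Icc a b, HasDerivWithinAt p (p' x) (Icc a b) x)
    (hp' : ∀ x ∈ Icc a b, HasDerivWithinAt p' (p'' x) (Icc a b) x)
    (hu_ode : ∀ x ∈ Ioo a b, u'' x + Q₁ x * u x = 0)
    (hp_ode : ∀ x ∈ Ioo a b, p'' x + Q₂ x * p x = 0)
    (hQ : ∀ x ∈ Ioo a b, Q₁ x ≤ Q₂ x)
    (hua : u a = 0) (hub : u b = 0) (hu_pos : ∀ x ∈ Ioo a b, 0 < u x) :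
    ∃ x ∈ Icc a b, p x ≤ 0 := by
  by_contra! hp_pos
  have hcont {f f' : ℝ → ℝ} (hf : ∀ x ∈ Icc a b, HasDerivWithinAt f (f' x) (Icc a b) x) :
      ContinuousOn f (Icc a b) := fun x hx => (hf x hx).continuousWithinAt
  have hat {f f' : ℝ → ℝ} (hf : ∀ x ∈ Icc a b, HasDerivWithinAt f (f' x) (Icc a b) x)
      {x : ℝ} (hx : x ∈ Ioo a b) : HasDerivAt f (f' x) x :=
    (hf x (Ioo_subset_Icc_self hx)).hasDerivAt (Icc_mem_nhds hx.1 hx.2)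
  have ha : a ∈ Icc a b := left_mem_Icc.2 hab.le
  have hb : b ∈ Icc a b := right_mem_Icc.2 hab.le
  set W : ℝ → ℝ := fun y => u' y * p y - u y * p' y with hW
  have hW_mono : MonotoneOn W (Icc a b) := by
    refine monotoneOn_of_hasDerivWithinAt_nonneg (convex_Icc a b)
      (((hcont hu').mul (hcont hp)).sub ((hcont hu).mul (hcont hp')))
      (f' := fun x => (Q₂ x - Q₁ x) * (u x * p x)) (fun x hx => ?_) (fun x hx => ?_)
    · rw [interior_Icc] at hx
      refine ((((hat hu' hx).mul (hat hp hx)).sub ((hat hu hx).mul (hat hp' hx))).congr_deriv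
        ?_).hasDerivWithinAt
      linear_combination p x * hu_ode x hx - u x * hp_ode x hx
    · rw [interior_Icc] at hx
      exact mul_nonneg (sub_nonneg.2 (hQ x hx))
        (mul_pos (hu_pos x hx) (hp_pos x (Ioo_subset_Icc_self hx))).le
  have hu'a : 0 ≤ u' a := by
    have hmin : IsLocalMinOn u (Icc a b) a := IsMinOn.localize <| isMinOn_iff.2 fun x hx => by
      rcases hx.1.eq_or_lt with rfl | hax
      · exact le_rfl
      rcases hx.2.eq_or_lt with rfl | hxb
      · simp [hua, hub]
      · simpa [hua] using (hu_pos x ⟨hax, hxb⟩).le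
    have h1 : (1 : ℝ) ∈ posTangentConeAt (Icc a b) a :=
      one_mem_posTangentConeAt_iff_frequently.2 (Filter.Eventually.frequently (Icc_mem_nhdsGT hab))
    simpa using hmin.hasFDerivWithinAt_nonneg (hu a ha).hasFDerivWithinAt h1
  have hW_nonneg : ∀ x ∈ Icc a b, 0 ≤ W x := fun x hx =>
    le_trans (by simpa [hW, hua] using mul_nonneg hu'a (hp_pos a ha).le) (hW_mono ha hx hx.1)
  have hquot_mono : MonotoneOn (fun y => u y / p y) (Icc a b) := by
    refine monotoneOn_of_hasDerivWithinAt_nonneg (convex_Icc a b)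
      ((hcont hu).div (hcont hp) fun x hx => (hp_pos x hx).ne')
      (f' := fun x => W x / p x ^ 2) (fun x hx => ?_) (fun x hx => ?_)
    · rw [interior_Icc] at hx
      exact ((hat hu hx).div (hat hp hx) (hp_pos x (Ioo_subset_Icc_self hx)).ne').hasDerivWithinAt
    · rw [interior_Icc] at hx
      exact div_nonneg (hW_nonneg x (Ioo_subset_Icc_self hx)) (sq_nonneg _)
  have hmid : (a + b) / 2 ∈ Ioo a b := ⟨by linarith, by linarith⟩
  have := hquot_mono (Ioo_subset_Icc_self hmid) hb hmid.2.le
  simp only [hub, zero_div] at this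
  exact this.not_gt (div_pos (hu_pos _ hmid) (hp_pos _ (Ioo_subset_Icc_self hmid)))

theorem exists_zero_of_sturm_comparison (hab : a < b)
    (hu : ∀ x ∈ Icc a b, HasDerivWithinAt u (u' x) (Icc a b) x)
    (hu' : ∀ x ∈ Icc a b, HasDerivWithinAt u' (u'' x) (Icc a b) x)
    (hp : ∀ x ∈ Icc a b, HasDerivWithinAt p (p' x) (Icc a b) x)
    (hp' : ∀ x ∈ Icc a b, HasDerivWithinAt p' (p'' x) (Icc a b) x)
    (hu_ode : ∀ x ∈ Ioo a b, u'' x + Q₁ x * u x = 0)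
    (hp_ode : ∀ x ∈ Ioo a b, p'' x + Q₂ x * p x = 0)
    (hQ : ∀ x ∈ Ioo a b, Q₁ x ≤ Q₂ x)
    (hua : u a = 0) (hub : u b = 0) (hu_ne : ∀ x ∈ Ioo a b, u x ≠ 0) :
    ∃ x ∈ Icc a b, p x = 0 := by
  by_contra! hp_ne
  obtain ⟨ε, hε⟩ := isPreconnected_Ioo.exists_mul_pos
    (fun x hx => (hu x (Ioo_subset_Icc_self hx)).continuousWithinAt.mono Ioo_subset_Icc_self)
    hu_ne
  obtain ⟨δ, hδ⟩ := isPreconnected_Icc.exists_mul_pos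
    (fun x hx => (hp x hx).continuousWithinAt) hp_ne
  obtain ⟨x, hx, hpx⟩ := exists_nonpos_of_sturm_comparison (Q₁ := Q₁) (Q₂ := Q₂) hab
    (fun x hx => (hu x hx).const_mul ε) (fun x hx => (hu' x hx).const_mul ε)
    (fun x hx => (hp x hx).const_mul δ) (fun x hx => (hp' x hx).const_mul δ)
    (fun x hx => by linear_combination ε * hu_ode x hx)
    (fun x hx => by linear_combination δ * hp_ode x hx) hQ
    (by simp [hua]) (by simp [hub]) hε
  exact hpx.not_gt (hδ x hx)

end SturmComparison

section PowerSeries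

variable {a : ℕ → ℝ} {e : ℕ → ℕ}

theorem summable_mul_natCast_mul_pow_sub_one (h : ∀ R : ℝ, Summable fun s => a s * R ^ e s)
    (R : ℝ) : Summable fun s => a s * e s * R ^ (e s - 1) := by
  refine .of_norm_bounded (h (2 * (|R| + 1))).abs fun s => ?_
  have he : (e s : ℝ) ≤ 2 ^ e s := by exact_mod_cast (Nat.lt_two_pow_self).le
  calc ‖a s * e s * R ^ (e s - 1)‖ = |a s| * (e s * |R| ^ (e s - 1)) := by
        simp [mul_assoc]
    _ ≤ |a s| * (2 ^ e s * (|R| + 1) ^ e s) := by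
        gcongr
        calc |R| ^ (e s - 1) ≤ (|R| + 1) ^ (e s - 1) := by gcongr; linarith
          _ ≤ (|R| + 1) ^ e s := pow_le_pow_right₀ (by linarith [abs_nonneg R]) (Nat.sub_le _ _)
    _ = |a s * (2 * (|R| + 1)) ^ e s| := by
        rw [abs_mul, abs_of_nonneg (by positivity : (0:ℝ) ≤ (2 * (|R| + 1)) ^ e s), mul_pow]

theorem hasDerivAt_tsum_mul_pow (h : ∀ R : ℝ, Summable fun s => a s * R ^ e s) (x : ℝ) :
    HasDerivAt (fun y => ∑' s, a s * y ^ e s) (∑' s, a s * e s * x ^ (e s - 1)) x := by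
  set R := |x| + 1
  have hx : x ∈ Metric.ball (0 : ℝ) R := by simp [R]
  refine hasDerivAt_tsum_of_isPreconnected (g := fun s y => a s * y ^ e s)
    (g' := fun s y => a s * e s * y ^ (e s - 1)) (summable_mul_natCast_mul_pow_sub_one h R).norm
    Metric.isOpen_ball (convex_ball 0 R).isPreconnected (fun s y _ => ?_) (fun s y hy => ?_)
    hx (h x) hx
  · simpa [mul_assoc] using (hasDerivAt_pow (e s) y).const_mul (a s)
  · rw [mem_ball_zero_iff] at hy
    simp only [norm_mul, norm_pow]
    gcongr
    rw [Real.norm_of_nonneg (by positivity : (0:ℝ) ≤ R)]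
    exact hy.le

theorem differentiable_tsum_mul_pow (h : ∀ R : ℝ, Summable fun s => a s * R ^ e s) :
    Differentiable ℝ fun y => ∑' s, a s * y ^ e s :=
  fun x => (hasDerivAt_tsum_mul_pow h x).differentiableAt

theorem deriv_tsum_mul_pow (h : ∀ R : ℝ, Summable fun s => a s * R ^ e s) :
    deriv (fun y => ∑' s, a s * y ^ e s) = fun x => ∑' s, a s * e s * x ^ (e s - 1) :=
  funext fun x => (hasDerivAt_tsum_mul_pow h x).deriv

end PowerSeries

theorem natCast_mul_pow_sub_one_mul_self (n : ℕ) (x : ℝ) :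
    (n : ℝ) * x ^ (n - 1) * x = n * x ^ n := by
  rcases n with _ | n <;> simp [pow_succ, mul_assoc]

section SqrtMulBesselJ

variable (m : ℕ) (c : ℝ)

def sqrtMulBesselJCoeff (s : ℕ) : ℝ :=
  √(c / 2) * ((-1) ^ s / (s.factorial * Real.Gamma ((m : ℝ) + 1 / 2 + s + 1))) *
    (c / 2) ^ (2 * s + m)

/-- Equal to `√r * besselJ (m + 1/2) (c * r)` for `r, c ≥ 0` (`sqrt_mul_besselJ_eq`), but written
as a power series in `r`, so that it is smooth on all of `ℝ`. -/
def sqrtMulBesselJSeries (r : ℝ) : ℝ :=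
  ∑' s, sqrtMulBesselJCoeff m c s * r ^ (2 * s + m + 1)

theorem sqrtMulBesselJCoeff_succ (s : ℕ) :
    sqrtMulBesselJCoeff m c (s + 1) * (4 * (s + 1) * (s + m + 3 / 2)) =
      -c ^ 2 * sqrtMulBesselJCoeff m c s := by
  have hΓ : Real.Gamma ((m : ℝ) + 1 / 2 + ((s : ℝ) + 1) + 1) =
      ((m : ℝ) + 1 / 2 + s + 1) * Real.Gamma ((m : ℝ) + 1 / 2 + s + 1) := by
    rw [← Real.Gamma_add_one (by positivity)]
    ring_nf
  have hΓ_pos : 0 < Real.Gamma ((m : ℝ) + 1 / 2 + s + 1) := Real.Gamma_pos_of_pos (by positivity)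
  simp only [sqrtMulBesselJCoeff, hΓ, Nat.factorial_succ, Nat.cast_mul, Nat.cast_succ]
  rw [show 2 * (s + 1) + m = 2 * s + m + 2 by ring, pow_add, pow_succ (-1 : ℝ)]
  field_simp
  ring

theorem summable_sqrtMulBesselJCoeff_mul_pow (R : ℝ) :
    Summable fun s => sqrtMulBesselJCoeff m c s * R ^ (2 * s + m + 1) := by
  refine summable_of_ratio_norm_eventually_le (r := 1 / 2) (by norm_num) ?_
  filter_upwards [eventually_ge_atTop ⌈c ^ 2 * R ^ 2⌉₊] with s hs
  have hs : c ^ 2 * R ^ 2 ≤ s := (Nat.ceil_le).1 hs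
  have hD : 0 < 4 * ((s : ℝ) + 1) * (s + m + 3 / 2) := by positivity
  have hcRD : c ^ 2 * R ^ 2 ≤ 4 * ((s : ℝ) + 1) * (s + m + 3 / 2) / 2 := by
    nlinarith [(m.cast_nonneg : (0:ℝ) ≤ m)]
  have hrec : |sqrtMulBesselJCoeff m c (s + 1)| * (4 * ((s : ℝ) + 1) * (s + m + 3 / 2)) =
      c ^ 2 * |sqrtMulBesselJCoeff m c s| := by
    simpa [abs_mul, abs_of_pos hD] using congrArg abs (sqrtMulBesselJCoeff_succ m c s)
  simp only [norm_mul, norm_pow, Real.norm_eq_abs]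
  rw [← mul_le_mul_iff_left₀ hD, show 2 * (s + 1) + m + 1 = 2 * s + m + 1 + 2 by ring, pow_add]
  calc _ = c ^ 2 * R ^ 2 * (|sqrtMulBesselJCoeff m c s| * |R| ^ (2 * s + m + 1)) := by
        rw [← sq_abs R]
        linear_combination (|R| ^ (2 * s + m + 1) * |R| ^ 2) * hrec
    _ ≤ 4 * ((s : ℝ) + 1) * (s + m + 3 / 2) / 2 *
          (|sqrtMulBesselJCoeff m c s| * |R| ^ (2 * s + m + 1)) := by gcongr
    _ = _ := by ring

theorem sqrt_mul_besselJ_eq {c r : ℝ} (hc : 0 ≤ c) (hr : 0 ≤ r) :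
    √r * besselJ ((m : ℝ) + 1 / 2) (c * r) = sqrtMulBesselJSeries m c r := by
  rw [besselJ, sqrtMulBesselJSeries, ← tsum_mul_left]
  congr 1
  funext s
  have hpow : (c * r / 2) ^ (2 * (s : ℝ) + ((m : ℝ) + 1 / 2)) * √r =
      √(c / 2) * (c / 2) ^ (2 * s + m) * r ^ (2 * s + m + 1) := by
    rw [show 2 * (s : ℝ) + ((m : ℝ) + 1 / 2) = ((2 * s + m : ℕ) : ℝ) + 1 / 2 by push_cast; ring,
      Real.rpow_add' (by positivity) (by positivity), Real.rpow_natCast, ← Real.sqrt_eq_rpow,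
      show c * r / 2 = c / 2 * r by ring, Real.sqrt_mul (by positivity), mul_pow, pow_succ]
    linear_combination ((c / 2) ^ (2 * s + m) * r ^ (2 * s + m) * √(c / 2)) * Real.mul_self_sqrt hr
  rw [sqrtMulBesselJCoeff]
  linear_combination ((-1) ^ s / (s.factorial * Real.Gamma ((m : ℝ) + 1 / 2 + s + 1))) * hpow

theorem differentiable_sqrtMulBesselJSeries : Differentiable ℝ (sqrtMulBesselJSeries m c) :=
  differentiable_tsum_mul_pow (summable_sqrtMulBesselJCoeff_mul_pow m c)

theorem deriv_sqrtMulBesselJSeries :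
    deriv (sqrtMulBesselJSeries m c) = fun x =>
      ∑' s, sqrtMulBesselJCoeff m c s * (2 * s + m + 1 : ℕ) * x ^ (2 * s + m + 1 - 1) :=
  deriv_tsum_mul_pow (summable_sqrtMulBesselJCoeff_mul_pow m c)

theorem differentiable_deriv_sqrtMulBesselJSeries :
    Differentiable ℝ (deriv (sqrtMulBesselJSeries m c)) := by
  rw [deriv_sqrtMulBesselJSeries]
  exact differentiable_tsum_mul_pow
    (summable_mul_natCast_mul_pow_sub_one (summable_sqrtMulBesselJCoeff_mul_pow m c))

theorem deriv_deriv_sqrtMulBesselJSeries :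
    deriv (deriv (sqrtMulBesselJSeries m c)) = fun x =>
      ∑' s, sqrtMulBesselJCoeff m c s * (2 * s + m + 1 : ℕ) * (2 * s + m + 1 - 1 : ℕ) *
        x ^ (2 * s + m + 1 - 1 - 1) := by
  rw [deriv_sqrtMulBesselJSeries]
  exact deriv_tsum_mul_pow
    (summable_mul_natCast_mul_pow_sub_one (summable_sqrtMulBesselJCoeff_mul_pow m c))

theorem sqrtMulBesselJSeries_ode {x : ℝ} (hx : x ≠ 0) :
    deriv (deriv (sqrtMulBesselJSeries m c)) x +
      (c ^ 2 - m * (m + 1) / x ^ 2) * sqrtMulBesselJSeries m c x = 0 := by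
  set f : ℕ → ℝ := fun s => sqrtMulBesselJCoeff m c s *
    (((2 * s + m + 1 : ℕ) : ℝ) * (2 * s + m : ℕ) - m * (m + 1)) * x ^ (2 * s + m + 1)
  have hterm : ∀ s, x ^ 2 * (sqrtMulBesselJCoeff m c s * (2 * s + m + 1 : ℕ) *
      (2 * s + m + 1 - 1 : ℕ) * x ^ (2 * s + m + 1 - 1 - 1)) -
        m * (m + 1) * (sqrtMulBesselJCoeff m c s * x ^ (2 * s + m + 1)) = f s := by
    intro s
    simp only [f, Nat.add_sub_cancel, pow_succ x (2 * s + m)]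
    linear_combination (sqrtMulBesselJCoeff m c s * (2 * s + m + 1 : ℕ) * x) *
      natCast_mul_pow_sub_one_mul_self (2 * s + m) x
  have h₀ := summable_sqrtMulBesselJCoeff_mul_pow m c x
  have h₂ := summable_mul_natCast_mul_pow_sub_one
    (summable_mul_natCast_mul_pow_sub_one (summable_sqrtMulBesselJCoeff_mul_pow m c)) x
  have hf : Summable f := by
    rw [← funext hterm]
    exact (h₂.mul_left _).sub (h₀.mul_left _)
  -- the coefficient recursion turns `∑ f` into the series of `-c² x² v` shifted by one index
  have hshift : ∀ s, f (s + 1) =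
      -(c ^ 2 * x ^ 2) * (sqrtMulBesselJCoeff m c s * x ^ (2 * s + m + 1)) := by
    intro s
    simp only [f]
    rw [show 2 * (s + 1) + m + 1 = 2 * s + m + 1 + 2 by ring, pow_add]
    push_cast
    linear_combination (x ^ (2 * s + m + 1) * x ^ 2) * sqrtMulBesselJCoeff_succ m c s
  have hsum : x ^ 2 * deriv (deriv (sqrtMulBesselJSeries m c)) x -
      m * (m + 1) * sqrtMulBesselJSeries m c x = -(c ^ 2 * x ^ 2) * sqrtMulBesselJSeries m c x := by
    rw [deriv_deriv_sqrtMulBesselJSeries, sqrtMulBesselJSeries, ← tsum_mul_left, ← tsum_mul_left,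
      ← Summable.tsum_sub (h₂.mul_left _) (h₀.mul_left _), ← tsum_mul_left]
    simp only [hterm]
    have hf₀ : f 0 = 0 := by simp only [f]; push_cast; ring
    rw [hf.tsum_eq_zero_add, hf₀, zero_add]
    simp only [hshift]
  field_simp
  linear_combination hsum

end SqrtMulBesselJ

section AssumptionA

variable {n σ : ℝ → ℝ} {n₁ n₂ M₁ M₂ : ℝ}

theorem AssumptionA.pos {r : ℝ} (hA : AssumptionA n σ n₁ n₂ M₁ M₂) (hr : r ∈ Icc (0 : ℝ) 1) :
    0 < σ r := by
  obtain ⟨-, -, hM₁, -, -, -, hA⟩ := hA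
  by_contra! hσ
  have := div_nonpos_of_nonneg_of_nonpos (sq_nonneg (n r)) hσ
  linarith [(hA r hr).2.2.2.1]

theorem AssumptionA.sq_mul_le_potential {r : ℝ} (hA : AssumptionA n σ n₁ n₂ M₁ M₂) (k : ℝ)
    (hr : r ∈ Ioc (0 : ℝ) 1) :
    k ^ 2 * M₁ ≤ k ^ 2 * n r ^ 2 / σ r
      + (derivWithin σ (Icc 0 1) r) ^ 2 / (4 * σ r ^ 2)
      - derivWithin (derivWithin σ (Icc 0 1)) (Icc 0 1) r / (2 * σ r)
      - derivWithin σ (Icc 0 1) r / (σ r * r) := by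
  have hr' : r ∈ Icc (0 : ℝ) 1 := Ioc_subset_Icc_self hr
  have hσ := hA.pos hr'
  obtain ⟨-, -, -, -, -, -, hA⟩ := hA
  obtain ⟨-, -, hσ', hM₁, -, hσ''⟩ := hA r hr'
  have h₁ : k ^ 2 * M₁ ≤ k ^ 2 * n r ^ 2 / σ r := by
    rw [mul_div_assoc]; exact mul_le_mul_of_nonneg_left hM₁ (sq_nonneg k)
  have h₂ : derivWithin (derivWithin σ (Icc 0 1)) (Icc 0 1) r / (2 * σ r) ≤
      (derivWithin σ (Icc 0 1) r) ^ 2 / (4 * σ r ^ 2) := by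
    rw [div_le_div_iff₀ (by positivity) (by positivity)]
    nlinarith
  have h₃ : derivWithin σ (Icc 0 1) r / (σ r * r) ≤ 0 :=
    div_nonpos_of_nonpos_of_nonneg hσ' (mul_pos hσ hr.1).le
  linarith

end AssumptionA

theorem sturm_comparison_3d_general
    (n σ : ℝ → ℝ) (n₁ n₂ M₁ M₂ : ℝ) (hA : AssumptionA n σ n₁ n₂ M₁ M₂)
    (m : ℕ) (k : ℝ) (hk : 0 < k)
    (ψ : ℝ → ℝ)
    (hψ : ∀ r ∈ Ioc (0:ℝ) 1,
      DifferentiableWithinAt ℝ ψ (Ioc 0 1) r ∧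
      DifferentiableWithinAt ℝ (derivWithin ψ (Ioc 0 1)) (Ioc 0 1) r)
    (hode : ∀ r ∈ Ioc (0:ℝ) 1,
      derivWithin (derivWithin ψ (Ioc 0 1)) (Ioc 0 1) r
        + (k ^ 2 * n r ^ 2 / σ r
            + (derivWithin σ (Icc 0 1) r) ^ 2 / (4 * σ r ^ 2)
            - derivWithin (derivWithin σ (Icc 0 1)) (Icc 0 1) r / (2 * σ r)
            - derivWithin σ (Icc 0 1) r / (σ r * r)
            - (m : ℝ) * ((m : ℝ) + 1) / r ^ 2) * ψ r = 0)
    (a b : ℝ) (ha : 0 < a) (hab : a < b) (hb : b ≤ 1)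
    (hJa : besselJ ((m : ℝ) + 1 / 2) (k * Real.sqrt M₁ * a) = 0)
    (hJb : besselJ ((m : ℝ) + 1 / 2) (k * Real.sqrt M₁ * b) = 0)
    (hJ : ∀ r ∈ Ioo a b, besselJ ((m : ℝ) + 1 / 2) (k * Real.sqrt M₁ * r) ≠ 0) :
    ∃ r ∈ Icc a b, ψ r = 0 := by
  set c := k * √M₁
  have hM₁ : 0 < M₁ := by linarith [hA.2.2.1]
  have hc : 0 < c := by positivity
  have hc2 : c ^ 2 = k ^ 2 * M₁ := by rw [mul_pow, Real.sq_sqrt hM₁.le]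
  have hv_zero {r : ℝ} (hr : 0 < r) :
      sqrtMulBesselJSeries m c r = 0 ↔ besselJ ((m : ℝ) + 1 / 2) (c * r) = 0 := by
    rw [← sqrt_mul_besselJ_eq m hc.le hr.le, mul_eq_zero, or_iff_right (Real.sqrt_pos.2 hr).ne']
  have hsub : Icc a b ⊆ Ioc 0 1 := fun x hx => ⟨ha.trans_le hx.1, hx.2.trans hb⟩
  exact exists_zero_of_sturm_comparison hab
    (Q₁ := fun r => c ^ 2 - m * (m + 1) / r ^ 2)
    (fun x _ => (differentiable_sqrtMulBesselJSeries m c x).hasDerivAt.hasDerivWithinAt)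
    (fun x _ => (differentiable_deriv_sqrtMulBesselJSeries m c x).hasDerivAt.hasDerivWithinAt)
    (fun x hx => ((hψ x (hsub hx)).1.hasDerivWithinAt).mono hsub)
    (fun x hx => ((hψ x (hsub hx)).2.hasDerivWithinAt).mono hsub)
    (fun x hx => sqrtMulBesselJSeries_ode m c (ha.trans hx.1).ne')
    (fun x hx => hode x (hsub (Ioo_subset_Icc_self hx)))
    (fun x hx => by
      have := hA.sq_mul_le_potential k (hsub (Ioo_subset_Icc_self hx))
      simp only [hc2]
      linarith)
    ((hv_zero ha).2 hJa) ((hv_zero (ha.trans hab)).2 hJb)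
    (fun x hx => (hv_zero (ha.trans hx.1)).not.2 (hJ x hx))

/-- Sturm comparison in three dimensions: between two consecutive zeros of
`r ↦ J_{m+1/2}(k√M₁·r)` in `(0,1]`, a nontrivial solution `ψ` of
`ψ'' + [k²n²/σ + σ'²/(4σ²) − σ''/(2σ) − σ'/(σr) − m(m+1)/r²]ψ = 0`
has at least one zero. -/
theorem sturm_comparison_3d
    (n σ : ℝ → ℝ) (n₁ n₂ M₁ M₂ : ℝ) (hA : AssumptionA n σ n₁ n₂ M₁ M₂)
    (m : ℕ) (hm : 1 ≤ m) (k : ℝ) (hk : 0 < k)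
    (ψ : ℝ → ℝ)
    (hψ : ∀ r ∈ Ioc (0:ℝ) 1,
      DifferentiableWithinAt ℝ ψ (Ioc 0 1) r ∧
      DifferentiableWithinAt ℝ (derivWithin ψ (Ioc 0 1)) (Ioc 0 1) r)
    (hψne : ¬ ∀ r ∈ Ioc (0:ℝ) 1, ψ r = 0)
    (hode : ∀ r ∈ Ioc (0:ℝ) 1,
      derivWithin (derivWithin ψ (Ioc 0 1)) (Ioc 0 1) r
        + (k ^ 2 * n r ^ 2 / σ r
            + (derivWithin σ (Icc 0 1) r) ^ 2 / (4 * σ r ^ 2)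
            - derivWithin (derivWithin σ (Icc 0 1)) (Icc 0 1) r / (2 * σ r)
            - derivWithin σ (Icc 0 1) r / (σ r * r)
            - (m : ℝ) * ((m : ℝ) + 1) / r ^ 2) * ψ r = 0)
    (a b : ℝ) (ha : 0 < a) (hab : a < b) (hb : b ≤ 1)
    (hJa : besselJ ((m : ℝ) + 1 / 2) (k * Real.sqrt M₁ * a) = 0)
    (hJb : besselJ ((m : ℝ) + 1 / 2) (k * Real.sqrt M₁ * b) = 0)
    (hJ : ∀ r ∈ Ioo a b, besselJ ((m : ℝ) + 1 / 2) (k * Real.sqrt M₁ * r) ≠ 0) :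
    ∃ r ∈ Icc a b, ψ r = 0 :=
  sturm_comparison_3d_general n σ n₁ n₂ M₁ M₂ hA m k hk ψ hψ hode a b ha hab hb hJa hJb hJ

end
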